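/- Let N ≥ 4, assume Size_3(Y) < 3 diam Y, and assume condition (A6): there exist pairwise distinct indices j_1, j_2, j_3, j_4 with |y_{j_1} − y_{j_2}| = |y_{j_3} − y_{j_4}| = diam Y such that there is no relabeling (z_1, z_2, z_3, z_4) of the four points y_{j_1}, y_{j_2}, y_{j_3}, y_{j_4} satisfying |z_1 − z_2| = |z_2 − z_3| = |z_3 − z_4| = |z_4 − z_1| = diam Y > |z_2 − z_4| ≥ |z_1 − z_3|. Then Size_4(Y) = 4 diam Y, the sum Σ ε_σ over all permutations σ of {1,…,N} that move exactly 4 indices and satisfy α(σ) = −4 diam Y is strictly positive, and for every a ∈ ℂ^N the polynomial P_{−4 diam Y} has degree exactly N − 4. -/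

import Mathlib

open Complex Real Filter Topology

noncomputable section

abbrev Pt := EuclideanSpace ℝ (Fin 3)

/-- Diameter of the tuple `Y`. -/
def diamY {N : ℕ} (Y : Fin N → Pt) : ℝ :=
  ⨆ p : Fin N × Fin N, dist (Y p.1) (Y p.2)

/-- Number of non-fixed points of a permutation. -/
def movedCard {N : ℕ} (σ : Equiv.Perm (Fin N)) : ℕ :=
  (Finset.univ.filter fun j => σ j ≠ j).card

/-- The `m`-size of `Y`. -/
def SizeM {N : ℕ} (Y : Fin N → Pt) (m : ℕ) : ℝ :=
  if m = 1 then diamY Y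
  else ⨆ σ : {σ : Equiv.Perm (Fin N) // movedCard σ = m}, ∑ j, dist (Y j) (Y (σ.1 j))

/-- The frequency `α(σ)`. -/
def alphaY {N : ℕ} (Y : Fin N → Pt) (σ : Equiv.Perm (Fin N)) : ℝ :=
  -∑ j ∈ Finset.univ.filter fun j => σ j ≠ j, dist (Y j) (Y (σ j))

/-- The constant `K₁(σ)`. -/
def K1 {N : ℕ} (Y : Fin N → Pt) (σ : Equiv.Perm (Fin N)) : ℝ :=
  ∏ j ∈ Finset.univ.filter fun j => σ j ≠ j, (dist (Y j) (Y (σ j)))⁻¹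

/-- The polynomial `p^{[σ]}`. -/
def pPoly {N : ℕ} (Y : Fin N → Pt) (a : Fin N → ℂ) (σ : Equiv.Perm (Fin N)) : Polynomial ℂ :=
  Polynomial.C (((Equiv.Perm.sign σ : ℤ) : ℂ) * (K1 Y σ : ℂ)) *
    ∏ j ∈ Finset.univ.filter fun j => σ j = j,
      (-Polynomial.X - Polynomial.C (4 * (π : ℂ) * a j))

open scoped Classical in
/-- The polynomial `P_b`. -/
def Pb {N : ℕ} (Y : Fin N → Pt) (a : Fin N → ℂ) (b : ℝ) : Polynomial ℂ :=
  ∑ σ ∈ Finset.univ.filter fun σ => alphaY Y σ = b, pPoly Y a σ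

open scoped Classical in
/-- The regularized Green function kernel. -/
def Gtil (z : ℂ) (x : Pt) : ℂ :=
  if x = 0 then 0 else Complex.exp (Complex.I * z * ‖x‖) / (4 * (π : ℂ) * ‖x‖)

/-- The characteristic matrix `Γ_{a,Y}(z)`. -/
def GammaM {N : ℕ} (a : Fin N → ℂ) (Y : Fin N → Pt) (z : ℂ) : Matrix (Fin N) (Fin N) ℂ :=
  Matrix.of fun j j' =>
    (if j = j' then a j - Complex.I * z / (4 * (π : ℂ)) else 0) - Gtil z (Y j - Y j')

/-- The characteristic determinant. -/
def detGamma {N : ℕ} (a : Fin N → ℂ) (Y : Fin N → Pt) (z : ℂ) : ℂ :=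
  (GammaM a Y z).det

open scoped Classical in
/-- The order of `z` as a zero of `f`. -/
def zeroOrder (f : ℂ → ℂ) (z : ℂ) : ℕ :=
  if h : AnalyticAt ℂ f z then (analyticOrderAt f z).toNat else 0

/-- Number of zeros of `f` in `S`, counted with multiplicities. -/
def countZeros (f : ℂ → ℂ) (S : Set ℂ) : ℝ :=
  ∑' k : ℂ, S.indicator (fun k => (zeroOrder f k : ℝ)) k

/-- The logarithmic-strip counting function `N^log(μ, R)`. -/
def NlogCount (f : ℂ → ℂ) (μ R : ℝ) : ℝ :=
  countZeros f {k | -μ * Real.log (|k.re| + 1) ≤ k.im ∧ ‖k‖ ≤ R}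

/-- The counting function `N(R)`. -/
def NCount (f : ℂ → ℂ) (R : ℝ) : ℝ :=
  countZeros f {k | ‖k‖ ≤ R}

/-- The four points `w 0, w 1, w 2, w 3` can be relabeled as `(z₁, z₂, z₃, z₄)` with
`|z₁−z₂| = |z₂−z₃| = |z₃−z₄| = |z₄−z₁| = d > |z₂−z₄| ≥ |z₁−z₃|`
(the configuration of Example 5.2). -/
def BadQuad (w : Fin 4 → Pt) (d : ℝ) : Prop :=
  ∃ e : Equiv.Perm (Fin 4),
    dist (w (e 0)) (w (e 1)) = d ∧ dist (w (e 1)) (w (e 2)) = d ∧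
    dist (w (e 2)) (w (e 3)) = d ∧ dist (w (e 3)) (w (e 0)) = d ∧
    dist (w (e 1)) (w (e 3)) < d ∧ dist (w (e 0)) (w (e 2)) ≤ dist (w (e 1)) (w (e 3))

/-!
Every `σ` with `α(σ) = -4 diam Y` moving four points moves each of them by exactly `diam Y`, so
it is either a product `(a b)(c d)` of two diameter swaps (sign `+1`) or a 4-cycle `(m b c e)`
(sign `-1`). As `Size₃ < 3 diam Y`, no three points are pairwise `diam Y` apart, so the diagonals
`m c` and `b e` of such a 4-cycle are shorter than `diam Y`. With `m` the least moved index, the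
map `(m b c e) ↦ (m b)(c e)` is injective, since `c` is the unique moved point at distance
`diam Y` from `b` other than `m`, and it misses `(j₁ j₂)(j₃ j₄)` because of (A6). Hence the
even permutations outnumber the odd ones. The coefficient of `ζ^(N-4)` in `P_{-4 diam Y}` is
`(-1)^(N-4) (diam Y)⁻⁴` times this sign sum, and no term has higher degree, since every `σ` with
`α(σ) = -4 diam Y` moves at least four points.
-/

open Equiv Finset

namespace Equiv.Perm

section

variable {α : Type*} [DecidableEq α] [Fintype α]

theorem support_swap_mul_swap_of_nodup {a b c d : α} (h : [a, b, c, d].Nodup) :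
    (swap a b * swap c d).support = {a, b, c, d} := by
  rw [(disjoint_swap_swap h).support_mul]
  simp only [List.nodup_cons, List.mem_cons, List.not_mem_nil] at h
  rw [support_swap (by tauto), support_swap (by tauto), insert_union, singleton_union]

theorem card_support_swap_mul_swap_of_nodup {a b c d : α} (h : [a, b, c, d].Nodup) :
    #(swap a b * swap c d).support = 4 := by
  rw [← sum_cycleType, cycleType_swap_mul_swap_of_nodup h]
  rfl

theorem sign_swap_mul_swap_of_nodup {a b c d : α} (h : [a, b, c, d].Nodup) :
    sign (swap a b * swap c d) = 1 := by
  rw [sign_of_cycleType, cycleType_swap_mul_swap_of_nodup h]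
  rfl

theorem sum_sign_eq_card_sub_card (s : Finset (Perm α)) :
    ∑ σ ∈ s, (sign σ : ℤ) = #(s.filter (sign · = 1)) - #(s.filter (¬ sign · = 1)) := by
  rw [← sum_filter_add_sum_filter_not s (sign · = 1),
    sum_congr rfl fun σ hσ => congrArg Units.val (mem_filter.mp hσ).2,
    sum_congr rfl fun σ hσ => congrArg Units.val (Int.units_ne_iff_eq_neg.mp (mem_filter.mp hσ).2)]
  simp [sub_eq_add_neg]

theorem isCycle_of_card_support_eq_four {σ : Perm α} (h4 : #σ.support = 4)
    (hσ : sign σ = -1) : σ.IsCycle := by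
  have hsum : σ.cycleType.sum = 4 := by rw [sum_cycleType, h4]
  have hcard : Multiset.card σ.cycleType • 2 ≤ 4 :=
    hsum ▸ Multiset.card_nsmul_le_sum fun _ => two_le_of_mem_cycleType
  rw [smul_eq_mul] at hcard
  rw [sign_of_cycleType, hsum] at hσ
  rw [← card_cycleType_eq_one]
  have : Multiset.card σ.cycleType ≤ 2 := by omega
  interval_cases Multiset.card σ.cycleType <;> first | rfl | exact absurd hσ (by decide)

theorem IsCycle.orbit_of_card_support_eq_four {σ : Perm α} (hc : σ.IsCycle)
    (h4 : #σ.support = 4) {m : α} (hm : m ∈ σ.support) :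
    [m, σ m, σ (σ m), σ (σ (σ m))].Nodup ∧ σ (σ (σ (σ m))) = m ∧
      σ.support = {m, σ m, σ (σ m), σ (σ (σ m))} := by
  have hlist : σ.toList m = [m, σ m, σ (σ m), σ (σ (σ m))] := by
    rw [Perm.toList, hc.cycleOf_eq (mem_support.mp hm), h4]
    rfl
  have hnodup := hlist ▸ nodup_toList σ m
  refine ⟨hnodup, ?_, ?_⟩
  · simpa [hc.orderOf, h4, pow_succ] using congrArg (· m) (pow_orderOf_eq_one σ)
  · refine (eq_of_subset_of_card_le (fun x hx => ?_) ?_).symm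
    · simp only [mem_insert, mem_singleton] at hx
      rcases hx with rfl | rfl | rfl | rfl <;> simpa using hm
    · simpa [h4] using (List.toFinset_card_of_nodup hnodup).ge

end

section OppositeSwaps

variable {α : Type*} [Fintype α] [LinearOrder α]

def oppositeSwaps (σ : Perm α) : Perm α :=
  if h : σ.support.Nonempty then
    swap (σ.support.min' h) (σ (σ.support.min' h)) *
      swap (σ (σ (σ.support.min' h))) (σ (σ (σ (σ.support.min' h))))
  else 1

theorem oppositeSwaps_eq {σ : Perm α} {m : α} (hm : IsLeast (σ.support : Set α) m) :
    oppositeSwaps σ = swap m (σ m) * swap (σ (σ m)) (σ (σ (σ m))) := by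
  rw [oppositeSwaps, dif_pos ⟨m, hm.1⟩, (σ.support.isLeast_min' ⟨m, hm.1⟩).unique hm]

theorem IsCycle.exists_isLeast_support {σ : Perm α} (hc : σ.IsCycle) :
    ∃ m, IsLeast (σ.support : Set α) m :=
  ⟨_, isLeast_min' _ hc.nonempty_support⟩

theorem IsCycle.support_oppositeSwaps {σ : Perm α} (hc : σ.IsCycle) (h4 : #σ.support = 4) :
    (oppositeSwaps σ).support = σ.support := by
  obtain ⟨m, hm⟩ := hc.exists_isLeast_support
  obtain ⟨hnd, -, hsupp⟩ := hc.orbit_of_card_support_eq_four h4 hm.1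
  rw [oppositeSwaps_eq hm, support_swap_mul_swap_of_nodup hnd, hsupp]

theorem IsCycle.sign_oppositeSwaps {σ : Perm α} (hc : σ.IsCycle) (h4 : #σ.support = 4) :
    Perm.sign (oppositeSwaps σ) = 1 := by
  obtain ⟨m, hm⟩ := hc.exists_isLeast_support
  rw [oppositeSwaps_eq hm,
    sign_swap_mul_swap_of_nodup (hc.orbit_of_card_support_eq_four h4 hm.1).1]

theorem IsCycle.oppositeSwaps_apply {σ : Perm α} (hc : σ.IsCycle) (h4 : #σ.support = 4) {m : α}
    (hm : IsLeast (σ.support : Set α) m) : oppositeSwaps σ m = σ m := by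
  have hnd := (hc.orbit_of_card_support_eq_four h4 hm.1).1
  simp only [List.nodup_cons, List.mem_cons, List.not_mem_nil, or_false, not_or] at hnd
  rw [oppositeSwaps_eq hm, mul_apply, swap_apply_of_ne_of_ne hnd.1.2.1 hnd.1.2.2, swap_apply_left]

end OppositeSwaps

end Equiv.Perm

theorem exists_perm_comp_eq_of_range_eq {ι β : Type*} {g u : ι → β} (hg : Function.Injective g)
    (hu : Function.Injective u) (h : Set.range u = Set.range g) : ∃ e : Perm ι, g ∘ e = u :=
  ⟨(ofInjective u hu).trans ((setCongr h).trans (ofInjective g hg).symm),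
    funext fun i => by simp [apply_ofInjective_symm]⟩

open Equiv.Perm

section Extremal

variable {N : ℕ} (Y : Fin N → Pt)

theorem dist_le_diamY (j j' : Fin N) : dist (Y j) (Y j') ≤ diamY Y :=
  le_ciSup (f := fun p : Fin N × Fin N => dist (Y p.1) (Y p.2)) (Set.finite_range _).bddAbove
    (j, j')

theorem movedCard_eq (σ : Perm (Fin N)) : movedCard σ = #σ.support :=
  rfl

theorem alphaY_eq (σ : Perm (Fin N)) : alphaY Y σ = -∑ j ∈ σ.support, dist (Y j) (Y (σ j)) :=
  rfl

theorem sum_dist_eq_sum_support (σ : Perm (Fin N)) :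
    ∑ j, dist (Y j) (Y (σ j)) = ∑ j ∈ σ.support, dist (Y j) (Y (σ j)) :=
  (sum_subset (subset_univ _) fun j _ hj => by rw [notMem_support.mp hj, dist_self]).symm

theorem sum_support_dist_le (σ : Perm (Fin N)) :
    ∑ j ∈ σ.support, dist (Y j) (Y (σ j)) ≤ #σ.support * diamY Y := by
  simpa using sum_le_card_nsmul _ _ _ fun j _ => dist_le_diamY Y j (σ j)

theorem sum_dist_le_sizeM {m : ℕ} (hm : m ≠ 1) {σ : Perm (Fin N)} (hσ : movedCard σ = m) :
    ∑ j, dist (Y j) (Y (σ j)) ≤ SizeM Y m := by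
  rw [SizeM, if_neg hm]
  exact le_ciSup (f := fun σ : {σ : Perm (Fin N) // movedCard σ = m} =>
    ∑ j, dist (Y j) (Y (σ.1 j))) (Set.finite_range _).bddAbove ⟨σ, hσ⟩

theorem sum_support_swap_mul_swap {a b c d : Fin N} (h : [a, b, c, d].Nodup) :
    ∑ j ∈ (swap a b * swap c d).support, dist (Y j) (Y ((swap a b * swap c d) j)) =
      2 * dist (Y a) (Y b) + 2 * dist (Y c) (Y d) := by
  rw [support_swap_mul_swap_of_nodup h]
  simp only [List.nodup_cons, List.mem_cons, List.not_mem_nil] at h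
  simp (disch := grind) [sum_insert, swap_apply_of_ne_of_ne, dist_comm (Y b), dist_comm (Y d)]
  ring

theorem dist_eq_diamY_of_alphaY_eq {k : ℕ} {σ : Perm (Fin N)} (hk : #σ.support = k)
    (hα : alphaY Y σ = -(k * diamY Y)) {j : Fin N} (hj : j ∈ σ.support) :
    dist (Y j) (Y (σ j)) = diamY Y := by
  by_contra hne
  have hlt := sum_lt_sum (fun i _ => dist_le_diamY Y i (σ i))
    ⟨j, hj, (dist_le_diamY Y _ _).lt_of_ne hne⟩
  rw [alphaY_eq, neg_inj] at hα
  simp [hα, hk] at hlt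

theorem le_card_support_of_alphaY_eq (hd : 0 < diamY Y) {k : ℕ} {σ : Perm (Fin N)}
    (hα : alphaY Y σ = -(k * diamY Y)) : k ≤ #σ.support := by
  rw [alphaY_eq, neg_inj] at hα
  exact_mod_cast le_of_mul_le_mul_right (hα ▸ sum_support_dist_le Y σ) hd

theorem dist_lt_diamY_of_sizeM_three_lt (hS3 : SizeM Y 3 < 3 * diamY Y) {a b c : Fin N}
    (h : [a, b, c].Nodup) (hab : dist (Y a) (Y b) = diamY Y) (hbc : dist (Y b) (Y c) = diamY Y) :
    dist (Y a) (Y c) < diamY Y := by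
  refine (dist_le_diamY Y a c).lt_of_ne fun hac => hS3.not_ge ?_
  have hsupp := support_swap_mul_swap h
  simp only [List.nodup_cons, List.mem_cons, List.not_mem_nil] at h
  calc 3 * diamY Y = ∑ j, dist (Y j) (Y ((swap a b * swap b c) j)) := by
        rw [sum_dist_eq_sum_support, hsupp]
        simp (disch := grind) [sum_insert, swap_apply_of_ne_of_ne, hab, hbc, dist_comm (Y c), hac]
        ring
    _ ≤ SizeM Y 3 :=
        sum_dist_le_sizeM Y (by norm_num) (by
          rw [movedCard_eq, hsupp]; exact card_eq_three.mpr ⟨a, b, c, by tauto⟩)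

theorem BadQuad.of_comp {w : Fin 4 → Pt} {d : ℝ} (e : Perm (Fin 4)) (h : BadQuad (w ∘ e) d) :
    BadQuad w d := by
  obtain ⟨e', h⟩ := h
  exact ⟨e'.trans e, h⟩

theorem badQuad_of_dist_eq_of_dist_lt {w : Fin 4 → Pt} {d : ℝ} (h01 : dist (w 0) (w 1) = d)
    (h12 : dist (w 1) (w 2) = d) (h23 : dist (w 2) (w 3) = d) (h30 : dist (w 3) (w 0) = d)
    (h02 : dist (w 0) (w 2) < d) (h13 : dist (w 1) (w 3) < d) : BadQuad w d := by
  rcases le_total (dist (w 0) (w 2)) (dist (w 1) (w 3)) with h | h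
  · exact ⟨1, h01, h12, h23, h30, h13, h⟩
  · refine ⟨finRotate 4, ?_⟩
    simp only [show finRotate 4 0 = 1 by decide, show finRotate 4 1 = 2 by decide,
      show finRotate 4 2 = 3 by decide, show finRotate 4 3 = 0 by decide]
    exact ⟨h12, h23, h30, h01, by rwa [dist_comm], by rwa [dist_comm (w 2)]⟩

theorem dist_sides_eq_and_diagonals_lt (hS3 : SizeM Y 3 < 3 * diamY Y)
    {σ : Perm (Fin N)} (hc : σ.IsCycle) (h4 : #σ.support = 4)
    (hα : alphaY Y σ = -(4 * diamY Y)) {m : Fin N} (hm : m ∈ σ.support) :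
    dist (Y m) (Y (σ m)) = diamY Y ∧ dist (Y (σ m)) (Y (σ (σ m))) = diamY Y ∧
      dist (Y (σ (σ m))) (Y (σ (σ (σ m)))) = diamY Y ∧ dist (Y (σ (σ (σ m)))) (Y m) = diamY Y ∧
      dist (Y m) (Y (σ (σ m))) < diamY Y ∧ dist (Y (σ m)) (Y (σ (σ (σ m)))) < diamY Y := by
  obtain ⟨hnd, hσ4, -⟩ := hc.orbit_of_card_support_eq_four h4 hm
  have hside : ∀ j ∈ σ.support, dist (Y j) (Y (σ j)) = diamY Y := fun j hj =>
    dist_eq_diamY_of_alphaY_eq Y (k := 4) h4 hα hj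
  have h01 := hside m hm
  have h12 := hside (σ m) (by simpa using hm)
  have h23 := hside (σ (σ m)) (by simpa using hm)
  have h30 := hσ4 ▸ hside (σ (σ (σ m))) (by simpa using hm)
  simp only [List.nodup_cons, List.mem_cons, List.not_mem_nil] at hnd
  exact ⟨h01, h12, h23, h30,
    dist_lt_diamY_of_sizeM_three_lt Y hS3 (by simp; tauto) h01 h12,
    dist_lt_diamY_of_sizeM_three_lt Y hS3 (by simp; tauto) h12 h23⟩

theorem badQuad_of_isCycle (hS3 : SizeM Y 3 < 3 * diamY Y) {σ : Perm (Fin N)}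
    (hc : σ.IsCycle) (h4 : #σ.support = 4) (hα : alphaY Y σ = -(4 * diamY Y))
    {g : Fin 4 → Fin N} (hg : Function.Injective g) (hrange : Set.range g = σ.support) :
    BadQuad (Y ∘ g) (diamY Y) := by
  obtain ⟨m, hm⟩ := hc.nonempty_support
  obtain ⟨hnd, -, hsupp⟩ := hc.orbit_of_card_support_eq_four h4 hm
  obtain ⟨h01, h12, h23, h30, h02, h13⟩ :=
    dist_sides_eq_and_diagonals_lt Y hS3 hc h4 hα hm
  obtain ⟨e, he⟩ := exists_perm_comp_eq_of_range_eq (u := ![m, σ m, σ (σ m), σ (σ (σ m))]) hg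
    (List.nodup_ofFn.mp hnd) (by rw [hrange, hsupp]; ext; simp; tauto)
  refine BadQuad.of_comp e ?_
  rw [Function.comp_assoc, he]
  exact badQuad_of_dist_eq_of_dist_lt h01 h12 h23 h30 h02 h13

theorem alphaY_oppositeSwaps (hS3 : SizeM Y 3 < 3 * diamY Y) {σ : Perm (Fin N)}
    (hc : σ.IsCycle) (h4 : #σ.support = 4) (hα : alphaY Y σ = -(4 * diamY Y)) :
    alphaY Y (oppositeSwaps σ) = -(4 * diamY Y) := by
  obtain ⟨m, hm⟩ := hc.exists_isLeast_support
  obtain ⟨h01, -, h23, -⟩ := dist_sides_eq_and_diagonals_lt Y hS3 hc h4 hα hm.1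
  rw [alphaY_eq, oppositeSwaps_eq hm,
    sum_support_swap_mul_swap Y (hc.orbit_of_card_support_eq_four h4 hm.1).1, h01, h23]
  ring

theorem eq_of_oppositeSwaps_eq (hS3 : SizeM Y 3 < 3 * diamY Y)
    {σ σ' : Perm (Fin N)} (hc : σ.IsCycle) (hc' : σ'.IsCycle) (h4 : #σ.support = 4)
    (h4' : #σ'.support = 4) (hα : alphaY Y σ = -(4 * diamY Y))
    (hα' : alphaY Y σ' = -(4 * diamY Y)) (heq : oppositeSwaps σ = oppositeSwaps σ') :
    σ = σ' := by
  have hsupp : σ.support = σ'.support := by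
    rw [← hc.support_oppositeSwaps h4, heq, hc'.support_oppositeSwaps h4']
  obtain ⟨m, hm⟩ := hc.exists_isLeast_support
  have hm' : IsLeast (σ'.support : Set (Fin N)) m := hsupp ▸ hm
  obtain ⟨hnd, hσ4, hs⟩ := hc.orbit_of_card_support_eq_four h4 hm.1
  obtain ⟨hnd', hσ4', hs'⟩ := hc'.orbit_of_card_support_eq_four h4' hm'.1
  have h1 : σ m = σ' m := by
    rw [← hc.oppositeSwaps_apply h4 hm, heq, hc'.oppositeSwaps_apply h4' hm']
  obtain ⟨-, h12, h23, -, -, h13⟩ := dist_sides_eq_and_diagonals_lt Y hS3 hc h4 hα hm.1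
  obtain ⟨-, h12', -⟩ := dist_sides_eq_and_diagonals_lt Y hS3 hc' h4' hα' hm'.1
  have hmem : ∀ x ∈ σ'.support, x = m ∨ x = σ m ∨ x = σ (σ m) ∨ x = σ (σ (σ m)) := by
    intro x hx
    rw [← hsupp, hs] at hx
    simpa using hx
  simp only [List.nodup_cons, List.mem_cons, List.not_mem_nil, or_false, not_or,
    List.nodup_nil, and_true] at hnd'
  have h2 : σ (σ m) = σ' (σ' m) := by
    rcases hmem (σ' (σ' m)) (by simpa using hm'.1) with h | h | h | h
    · exact absurd h.symm hnd'.1.2.1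
    · exact absurd (h.trans h1).symm hnd'.2.1.1
    · exact h.symm
    · exact absurd (h ▸ h1 ▸ h12') h13.ne
  have h3 : σ (σ (σ m)) = σ' (σ' (σ' m)) := by
    rcases hmem (σ' (σ' (σ' m))) (by simpa using hm'.1) with h | h | h | h
    · exact absurd h.symm hnd'.1.2.2
    · exact absurd (h.trans h1).symm hnd'.2.1.2
    · exact absurd (h.trans h2).symm hnd'.2.2.1
    · exact h.symm
  refine Equiv.ext fun x => ?_
  by_cases hx : x ∈ σ.support
  · rw [hs] at hx
    simp only [mem_insert, mem_singleton] at hx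
    rcases hx with rfl | rfl | rfl | rfl
    · exact h1
    · rw [h2, h1]
    · rw [h3, h2]
    · rw [hσ4, h3, hσ4']
  · rw [notMem_support.mp hx, notMem_support.mp (hsupp ▸ hx)]

theorem sum_sign_pos_of_not_badQuad (hS3 : SizeM Y 3 < 3 * diamY Y) {j₁ j₂ j₃ j₄ : Fin N}
    (hnd : [j₁, j₂, j₃, j₄].Nodup) (h12 : dist (Y j₁) (Y j₂) = diamY Y)
    (h34 : dist (Y j₃) (Y j₄) = diamY Y) (hbad : ¬ BadQuad ![Y j₁, Y j₂, Y j₃, Y j₄] (diamY Y)) :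
    0 < ∑ σ ∈ univ.filter (fun σ : Perm (Fin N) => movedCard σ = 4 ∧
      alphaY Y σ = -(4 * diamY Y)), (Perm.sign σ : ℤ) := by
  set S := univ.filter (fun σ : Perm (Fin N) => movedCard σ = 4 ∧ alphaY Y σ = -(4 * diamY Y))
  set τ := swap j₁ j₂ * swap j₃ j₄
  have hτ : τ ∈ S.filter (Perm.sign · = 1) :=
    mem_filter.mpr ⟨mem_filter.mpr ⟨mem_univ _, card_support_swap_mul_swap_of_nodup hnd,
      by rw [alphaY_eq, sum_support_swap_mul_swap Y hnd, h12, h34]; ring⟩,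
      sign_swap_mul_swap_of_nodup hnd⟩
  have hodd : ∀ σ ∈ S.filter (¬ Perm.sign · = 1),
      σ.IsCycle ∧ #σ.support = 4 ∧ alphaY Y σ = -(4 * diamY Y) := by
    intro σ hσ
    obtain ⟨hσS, hs⟩ := mem_filter.mp hσ
    obtain ⟨-, h4, hα⟩ := mem_filter.mp hσS
    exact ⟨isCycle_of_card_support_eq_four h4 (Int.units_ne_iff_eq_neg.mp hs), h4, hα⟩
  have hmaps : Set.MapsTo oppositeSwaps (S.filter (¬ Perm.sign · = 1) : Set (Perm (Fin N)))
      ((S.filter (Perm.sign · = 1)).erase τ) := by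
    intro σ hσ
    obtain ⟨hc, h4, hα⟩ := hodd σ hσ
    refine mem_erase.mpr ⟨fun hστ => hbad ?_, mem_filter.mpr ⟨mem_filter.mpr ⟨mem_univ _,
      by rw [movedCard_eq, hc.support_oppositeSwaps h4, h4], alphaY_oppositeSwaps Y hS3 hc h4 hα⟩,
      hc.sign_oppositeSwaps h4⟩⟩
    have hrange : Set.range ![j₁, j₂, j₃, j₄] = σ.support := by
      rw [← hc.support_oppositeSwaps h4, hστ, support_swap_mul_swap_of_nodup hnd]
      ext
      simp
      tauto
    convert badQuad_of_isCycle Y hS3 hc h4 hα (g := ![j₁, j₂, j₃, j₄])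
      (List.nodup_ofFn.mp hnd) hrange using 1
    ext i
    fin_cases i <;> rfl
  have hinj : Set.InjOn oppositeSwaps (S.filter (¬ Perm.sign · = 1) : Set (Perm (Fin N))) :=
    fun σ hσ σ' hσ' heq => by
      obtain ⟨hc, h4, hα⟩ := hodd σ hσ
      obtain ⟨hc', h4', hα'⟩ := hodd σ' hσ'
      exact eq_of_oppositeSwaps_eq Y hS3 hc hc' h4 h4' hα hα' heq
  have hcard := card_le_card_of_injOn _ hmaps hinj
  rw [card_erase_of_mem hτ] at hcard
  have hpos := card_pos.mpr ⟨τ, hτ⟩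
  rw [sum_sign_eq_card_sub_card]
  omega

theorem sizeM_four_eq {j₁ j₂ j₃ j₄ : Fin N} (hnd : [j₁, j₂, j₃, j₄].Nodup)
    (h12 : dist (Y j₁) (Y j₂) = diamY Y) (h34 : dist (Y j₃) (Y j₄) = diamY Y) :
    SizeM Y 4 = 4 * diamY Y := by
  have hτ : movedCard (swap j₁ j₂ * swap j₃ j₄) = 4 := card_support_swap_mul_swap_of_nodup hnd
  refine le_antisymm ?_ ?_
  · rw [SizeM, if_neg (by norm_num)]
    have : Nonempty {σ : Perm (Fin N) // movedCard σ = 4} := ⟨⟨_, hτ⟩⟩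
    refine ciSup_le fun σ => ?_
    rw [sum_dist_eq_sum_support]
    exact (sum_support_dist_le Y σ.1).trans_eq (by rw [← movedCard_eq, σ.2]; norm_num)
  · calc 4 * diamY Y = ∑ j, dist (Y j) (Y ((swap j₁ j₂ * swap j₃ j₄) j)) := by
          rw [sum_dist_eq_sum_support, sum_support_swap_mul_swap Y hnd, h12, h34]; ring
      _ ≤ SizeM Y 4 := sum_dist_le_sizeM Y (by norm_num) hτ

end Extremal

section Polynomials

open Polynomial

variable {N : ℕ} (Y : Fin N → Pt) (a : Fin N → ℂ)

theorem pPoly_eq (σ : Perm (Fin N)) :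
    pPoly Y a σ = C ((Perm.sign σ : ℤ) * (K1 Y σ : ℂ) * (-1) ^ (N - #σ.support)) *
      ∏ j ∈ σ.supportᶜ, (X - C (-(4 * π * a j))) := by
  have hfix : univ.filter (fun j => σ j = j) = σ.supportᶜ := by ext; simp
  have hfactor : ∀ j, -X - C (4 * (π : ℂ) * a j) = -(X - C (-(4 * π * a j))) := fun j => by
    rw [C_neg]; ring
  rw [pPoly, hfix, prod_congr rfl fun j _ => hfactor j, prod_neg, card_compl, Fintype.card_fin]
  simp only [C_mul, C_pow, C_neg, C_1]
  ring

theorem natDegree_pPoly_le (σ : Perm (Fin N)) : (pPoly Y a σ).natDegree ≤ N - #σ.support := by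
  rw [pPoly_eq]
  refine (natDegree_C_mul_le _ _).trans_eq ?_
  rw [natDegree_finsetProd_X_sub_C_eq_card, card_compl, Fintype.card_fin]

theorem coeff_pPoly (σ : Perm (Fin N)) :
    (pPoly Y a σ).coeff (N - #σ.support) =
      (Perm.sign σ : ℤ) * (K1 Y σ : ℂ) * (-1) ^ (N - #σ.support) := by
  have hmonic := (monic_prod_X_sub_C (fun j => -(4 * (π : ℂ) * a j)) σ.supportᶜ).coeff_natDegree
  rw [natDegree_finsetProd_X_sub_C_eq_card, card_compl, Fintype.card_fin] at hmonic
  rw [pPoly_eq, coeff_C_mul, hmonic, mul_one]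

theorem K1_eq_of_dist_eq {σ : Perm (Fin N)}
    (h : ∀ j ∈ σ.support, dist (Y j) (Y (σ j)) = diamY Y) :
    K1 Y σ = (diamY Y)⁻¹ ^ #σ.support :=
  (prod_congr rfl fun j hj => by rw [h j hj]).trans (prod_const _)

theorem natDegree_Pb_neg_four_mul_diamY_le (hd : 0 < diamY Y) :
    (Pb Y a (-(4 * diamY Y))).natDegree ≤ N - 4 :=
  natDegree_sum_le_of_forall_le _ _ fun σ hσ => (natDegree_pPoly_le Y a σ).trans
    (Nat.sub_le_sub_left (le_card_support_of_alphaY_eq Y hd (k := 4) (mem_filter.mp hσ).2) N)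

theorem coeff_Pb_neg_four_mul_diamY (hd : 0 < diamY Y) :
    (Pb Y a (-(4 * diamY Y))).coeff (N - 4) =
      ((∑ σ ∈ univ.filter (fun σ : Perm (Fin N) => movedCard σ = 4 ∧
        alphaY Y σ = -(4 * diamY Y)), (Perm.sign σ : ℤ) : ℤ) : ℂ) *
        ((diamY Y : ℂ)⁻¹ ^ 4 * (-1) ^ (N - 4)) := by
  set F := univ.filter fun σ : Perm (Fin N) => alphaY Y σ = -(4 * diamY Y)
  have hzero : ∑ σ ∈ F.filter (¬ #·.support = 4), (pPoly Y a σ).coeff (N - 4) = 0 :=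
    sum_eq_zero fun σ hσ => by
      obtain ⟨hσF, h4⟩ := mem_filter.mp hσ
      have hN := (card_le_univ σ.support).trans_eq (Fintype.card_fin N)
      have := le_card_support_of_alphaY_eq Y hd (k := 4) (mem_filter.mp hσF).2
      exact coeff_eq_zero_of_natDegree_lt ((natDegree_pPoly_le Y a σ).trans_lt (by omega))
  have hF4 : F.filter (#·.support = 4) = univ.filter (fun σ : Perm (Fin N) =>
      movedCard σ = 4 ∧ alphaY Y σ = -(4 * diamY Y)) := by
    ext σ
    simp [F, movedCard_eq, and_comm]
  rw [Pb, finsetSum_coeff, ← sum_filter_add_sum_filter_not F (#·.support = 4), hzero, add_zero,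
    hF4, Int.cast_sum, sum_mul]
  refine sum_congr rfl fun σ hσ => ?_
  obtain ⟨h4, hα⟩ := (mem_filter.mp hσ).2
  have h4 : #σ.support = 4 := h4
  have hcoeff := coeff_pPoly Y a σ
  rw [K1_eq_of_dist_eq Y fun j hj => dist_eq_diamY_of_alphaY_eq Y (k := 4) h4 hα hj, h4] at hcoeff
  rw [hcoeff]
  push_cast
  ring

theorem Pb_ne_zero_and_natDegree_eq (hd : 0 < diamY Y)
    (hsign : 0 < ∑ σ ∈ univ.filter (fun σ : Perm (Fin N) => movedCard σ = 4 ∧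
      alphaY Y σ = -(4 * diamY Y)), (Perm.sign σ : ℤ)) :
    Pb Y a (-(4 * diamY Y)) ≠ 0 ∧ (Pb Y a (-(4 * diamY Y))).natDegree = N - 4 := by
  have hd' : (diamY Y : ℂ) ≠ 0 := by exact_mod_cast hd.ne'
  have hne : (Pb Y a (-(4 * diamY Y))).coeff (N - 4) ≠ 0 := by
    rw [coeff_Pb_neg_four_mul_diamY Y a hd]
    exact mul_ne_zero (by exact_mod_cast hsign.ne') (by simp [hd'])
  exact ⟨fun h => hne (by rw [h, coeff_zero]),
    natDegree_eq_of_le_of_coeff_ne_zero (natDegree_Pb_neg_four_mul_diamY_le Y a hd) hne⟩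

end Polynomials

open scoped Classical in
theorem statement10_general {N : ℕ} (Y : Fin N → Pt) (hY : Function.Injective Y)
    (hS3 : SizeM Y 3 < 3 * diamY Y)
    (hA6 : ∃ j₁ j₂ j₃ j₄ : Fin N, j₁ ≠ j₂ ∧ j₁ ≠ j₃ ∧ j₁ ≠ j₄ ∧ j₂ ≠ j₃ ∧ j₂ ≠ j₄ ∧ j₃ ≠ j₄ ∧
      dist (Y j₁) (Y j₂) = diamY Y ∧ dist (Y j₃) (Y j₄) = diamY Y ∧
      ¬ BadQuad ![Y j₁, Y j₂, Y j₃, Y j₄] (diamY Y)) :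
    SizeM Y 4 = 4 * diamY Y ∧
    0 < ∑ σ ∈ Finset.univ.filter
        (fun σ : Equiv.Perm (Fin N) => movedCard σ = 4 ∧ alphaY Y σ = -(4 * diamY Y)),
        ((Equiv.Perm.sign σ : ℤ)) ∧
    ∀ a : Fin N → ℂ,
      Pb Y a (-(4 * diamY Y)) ≠ 0 ∧ (Pb Y a (-(4 * diamY Y))).natDegree = N - 4 := by
  obtain ⟨j₁, j₂, j₃, j₄, h12, h13, h14, h23, h24, h34, hd12, hd34, hbad⟩ := hA6
  have hnd : [j₁, j₂, j₃, j₄].Nodup := by simp [*]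
  have hd : 0 < diamY Y := hd12 ▸ dist_pos.mpr (hY.ne h12)
  have hsign := sum_sign_pos_of_not_badQuad Y hS3 hnd hd12 hd34 hbad
  exact ⟨sizeM_four_eq Y hnd hd12 hd34, hsign, fun a => Pb_ne_zero_and_natDegree_eq Y a hd hsign⟩

open scoped Classical in
/-- under (A6) (and `Size₃ < 3 diam Y`), `Size₄(Y) = 4 diam Y`, the sum of signs
of the permutations moving exactly 4 indices with `α(σ) = −4 diam Y` is positive, and
`P_{−4 diam Y}` has degree exactly `N − 4` for every `a`. -/
theorem statement10 {N : ℕ} (hN : 4 ≤ N) (Y : Fin N → Pt) (hY : Function.Injective Y)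
    (hS3 : SizeM Y 3 < 3 * diamY Y)
    (hA6 : ∃ j₁ j₂ j₃ j₄ : Fin N, j₁ ≠ j₂ ∧ j₁ ≠ j₃ ∧ j₁ ≠ j₄ ∧ j₂ ≠ j₃ ∧ j₂ ≠ j₄ ∧ j₃ ≠ j₄ ∧
      dist (Y j₁) (Y j₂) = diamY Y ∧ dist (Y j₃) (Y j₄) = diamY Y ∧
      ¬ BadQuad ![Y j₁, Y j₂, Y j₃, Y j₄] (diamY Y)) :
    SizeM Y 4 = 4 * diamY Y ∧
    0 < ∑ σ ∈ Finset.univ.filter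
        (fun σ : Equiv.Perm (Fin N) => movedCard σ = 4 ∧ alphaY Y σ = -(4 * diamY Y)),
        ((Equiv.Perm.sign σ : ℤ)) ∧
    ∀ a : Fin N → ℂ,
      Pb Y a (-(4 * diamY Y)) ≠ 0 ∧ (Pb Y a (-(4 * diamY Y))).natDegree = N - 4 :=
  statement10_general Y hY hS3 hA6
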